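/- arXiv:1705.04640 — 4 statements merged into one kernel-verified Lean document; each statement's English description precedes it below -/
import Mathlib

section
/- Let k ≥ 4 be an integer, and let R ⊆ ℝ^k be a set of red points such that no two red points are at distance exactly 1 from each other. If there exists an integer d with 2 ≤ d ≤ k+1 and two red points at distance exactly d from each other, then there exist a point p ∈ ℝ^k and a vector v ∈ ℝ^k with ‖v‖ = 1 such that the points p + i·v for i = 0, 1, …, k+2 are all blue (not in R). -/
/-!
Write the two red points as `x` and `x + d • v` with `‖v‖ = 1`, and suppose every `ℓ_{k+3}`
has a red point. For a unit `w ⊥ v`, the `ℓ_{k+3}` starting at `x - v/2 + (√3/2) w` in direction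
`v` has a red point `x + (i - 1/2) v + (√3/2) w`. Its index `i` is not `0, 1, d, d + 1`, where
that point is at distance 1 from `x` or from `x + d v`, so `i` takes at most `k - 1` values:
it is a `(k-1)`-colouring of the unit sphere of `v^⊥ ≅ ℝ^{k-1}`. Two unit vectors with inner
product `1/3` are at distance `2/√3`, so their points are at distance 1 and their colours differ.

No such colouring of the unit sphere of `ℝ^n`, `n ≥ 3`, exists. For unit vectors `u, u'` at
inner product `rhombusCos n` there are `n - 1` unit vectors `c j` (a regular simplex around the
axis `u + u'`) with `⟪c i, c j⟫ = ⟪c j, u⟫ = ⟪c j, u'⟫ = 1/3`. Their colours are distinct and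
differ from those of `u` and `u'`, so `u` and `u'` have the same colour. Finally there are unit
`w, z, w'` with `⟪w, w'⟫ = 1/3` and `⟪w, z⟫ = ⟪z, w'⟫ = rhombusCos n`.
-/

open RealInnerProductSpace Module Finset

section Sphere

variable {S : Type*} [NormedAddCommGroup S] [InnerProductSpace ℝ S]

theorem norm_eq_one_of_real_inner_self_eq_one {x : S} (h : ⟪x, x⟫ = 1) : ‖x‖ = 1 := by
  rw [norm_eq_sqrt_real_inner, h, Real.sqrt_one]

theorem exists_orthonormal_fin [FiniteDimensional ℝ S] {m : ℕ} (hm : m ≤ finrank ℝ S) :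
    ∃ e : Fin m → S, Orthonormal ℝ e :=
  ⟨stdOrthonormalBasis ℝ S ∘ Fin.castLE hm,
    (stdOrthonormalBasis ℝ S).orthonormal.comp _ (Fin.castLE_injective hm)⟩

theorem exists_orthonormal_orthogonal_pair [FiniteDimensional ℝ S] (u u' : S) {m : ℕ}
    (hm : m + 2 ≤ finrank ℝ S) :
    ∃ e : Fin m → S, Orthonormal ℝ e ∧ ∀ i, ⟪u, e i⟫ = 0 ∧ ⟪u', e i⟫ = 0 := by
  set K := Submodule.span ℝ (Set.range ![u, u'])
  have hK : finrank ℝ K ≤ 2 := (finrank_range_le_card _).trans_eq (Fintype.card_fin 2)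
  obtain ⟨e, he⟩ := exists_orthonormal_fin (S := Kᗮ) (m := m)
    (by have := K.finrank_add_finrank_orthogonal; omega)
  refine ⟨fun i => e i, he.comp_linearIsometry Kᗮ.subtypeₗᵢ, fun i => ⟨?_, ?_⟩⟩
  · exact Submodule.inner_right_of_mem_orthogonal
      (show u ∈ K from Submodule.subset_span ⟨0, rfl⟩) (e i).2
  · exact Submodule.inner_right_of_mem_orthogonal
      (show u' ∈ K from Submodule.subset_span ⟨1, rfl⟩) (e i).2

theorem Orthonormal.exists_regular_simplex {q : ℕ} (hq : 1 ≤ q) {G : Fin q → S}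
    (hG : Orthonormal ℝ G) :
    ∃ Y : Fin (q + 1) → S, (∀ j, ‖Y j‖ = 1) ∧ (∀ i j, i ≠ j → ⟪Y i, Y j⟫ = -1 / q) ∧
      ∀ x, (∀ t, ⟪x, G t⟫ = 0) → ∀ j, ⟪x, Y j⟫ = 0 := by
  set g := ∑ t, G t
  have hGg : ∀ i, ⟪G i, g⟫ = 1 := fun i => by
    simp [g, inner_sum, orthonormal_iff_ite.mp hG]
  have hgG : ∀ i, ⟪g, G i⟫ = 1 := fun i => by rw [real_inner_comm, hGg]
  have hgg : ⟪g, g⟫ = q := by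
    rw [show ⟪g, g⟫ = ∑ t, ⟪G t, g⟫ from sum_inner _ _ _]
    simp [hGg]
  have hq0 : (q : ℝ) ≠ 0 := by positivity
  obtain ⟨s, hs0, hs⟩ : ∃ s : ℝ, 0 < s ∧ s ^ 2 = q :=
    ⟨√q, by positivity, Real.sq_sqrt (by positivity)⟩
  set t := √(q + 1 : ℝ)
  have ht : t ^ 2 = q + 1 := Real.sq_sqrt (by positivity)
  obtain ⟨β, hβ⟩ : ∃ β : ℝ, β * q = 1 - t := ⟨(1 - t) / q, by field_simp⟩
  have hβ' : 2 * t * β + β ^ 2 * q = -1 := by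
    apply mul_right_cancel₀ hq0
    linear_combination (t + β * q + 1) * hβ - ht
  set Z : Fin (q + 1) → S := Fin.snoc (α := fun _ => S) (fun j => t • G j + β • g) (-g)
  have hZ : ∀ i j, ⟪Z i, Z j⟫ = if i = j then (q : ℝ) else -1 := by
    intro i j
    induction i using Fin.lastCases <;> induction j using Fin.lastCases <;>
      simp only [Z, Fin.snoc_castSucc, Fin.snoc_last, inner_add_left, inner_add_right,
        inner_neg_left, inner_neg_right, real_inner_smul_left, real_inner_smul_right, hGg, hgG,
        hgg, orthonormal_iff_ite.mp hG, Fin.castSucc_inj, Fin.castSucc_ne_last,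
        (Fin.castSucc_ne_last _).symm, if_true, if_false] <;> try split_ifs
    all_goals linarith
  refine ⟨fun j => s⁻¹ • Z j, fun j => ?_, fun i j hij => ?_, fun x hx j => ?_⟩
  · apply norm_eq_one_of_real_inner_self_eq_one
    rw [real_inner_smul_left, real_inner_smul_right, hZ, if_pos rfl, ← hs]
    field_simp
  · rw [real_inner_smul_left, real_inner_smul_right, hZ, if_neg hij, ← hs]
    field_simp
  · have hxg : ⟪x, g⟫ = 0 := by simp [g, inner_sum, hx]
    induction j using Fin.lastCases <;>
      simp [Z, inner_add_right, real_inner_smul_right, hx, hxg]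

/-- Unit vectors `u, u'` with `⟪u, u'⟫ = rhombusCos n` are the two unit vectors having inner
product `1/3` with each of `n - 1` unit vectors of pairwise inner product `1/3` in dimension `n`. -/
noncomputable def rhombusCos (n : ℕ) : ℝ := -(n + 5) / (3 * (n + 1))

theorem rhombusCos_sq_le {n : ℕ} (hn : 2 ≤ n) : rhombusCos n ^ 2 ≤ 2 / 3 := by
  have hn' : (2 : ℝ) ≤ n := by exact_mod_cast hn
  rw [rhombusCos, div_pow, div_le_div_iff₀ (by positivity) (by norm_num)]
  nlinarith

theorem exists_equiangular_of_inner_eq_rhombusCos [FiniteDimensional ℝ S] {q : ℕ} (hq : 1 ≤ q)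
    (hS : finrank ℝ S = q + 2) {u u' : S} (hu : ‖u‖ = 1) (hu' : ‖u'‖ = 1)
    (huu' : ⟪u, u'⟫ = rhombusCos (q + 2)) :
    ∃ c : Fin (q + 1) → S, (∀ j, ‖c j‖ = 1) ∧ (∀ i j, i ≠ j → ⟪c i, c j⟫ = 1 / 3) ∧
      ∀ j, ⟪c j, u⟫ = 1 / 3 ∧ ⟪c j, u'⟫ = 1 / 3 := by
  obtain ⟨G, hG, hGu⟩ := exists_orthonormal_orthogonal_pair u u' (m := q) hS.ge
  obtain ⟨Y, hY1, hYY, hY⟩ := hG.exists_regular_simplex hq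
  have huY : ∀ j, ⟪u, Y j⟫ = 0 := hY u fun t => (hGu t).1
  have hu'Y : ∀ j, ⟪u', Y j⟫ = 0 := hY u' fun t => (hGu t).2
  have hYu : ∀ j, ⟪Y j, u⟫ = 0 := fun j => by rw [real_inner_comm, huY]
  have hYu' : ∀ j, ⟪Y j, u'⟫ = 0 := fun j => by rw [real_inner_comm, hu'Y]
  set μ := rhombusCos (q + 2)
  set a : ℝ := (q + 3) / (2 * (q + 1))
  obtain ⟨r, hr⟩ : ∃ r : ℝ, r ^ 2 = 2 * q / (3 * (q + 1)) :=
    ⟨√_, Real.sq_sqrt (by positivity)⟩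
  have ha : a * (1 + μ) = 1 / 3 := by
    simp only [a, μ, rhombusCos]; push_cast; field_simp; ring
  have hnorm : 2 * a / 3 + r ^ 2 = 1 := by simp only [a, hr]; field_simp; ring
  have hoff : 2 * a / 3 + r ^ 2 * (-1 / q) = 1 / 3 := by simp only [a, hr]; field_simp; ring
  have hu'u : ⟪u', u⟫ = μ := by rw [real_inner_comm, huu']
  have huu := inner_self_eq_one_of_norm_eq_one (𝕜 := ℝ) hu
  have hu'u' := inner_self_eq_one_of_norm_eq_one (𝕜 := ℝ) hu'
  refine ⟨fun j => a • (u + u') + r • Y j, fun j => ?_, fun i j hij => ?_, fun j => ⟨?_, ?_⟩⟩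
  · apply norm_eq_one_of_real_inner_self_eq_one
    simp only [inner_add_left, inner_add_right, real_inner_smul_left, real_inner_smul_right,
      huu, hu'u', huu', hu'u, hYu, hYu', huY, hu'Y, inner_self_eq_one_of_norm_eq_one (hY1 j)]
    linear_combination 2 * a * ha + hnorm
  · simp only [inner_add_left, inner_add_right, real_inner_smul_left, real_inner_smul_right,
      huu, hu'u', huu', hu'u, hYu, hYu', huY, hu'Y, hYY i j hij]
    linear_combination 2 * a * ha + hoff
  · simp only [inner_add_left, real_inner_smul_left, huu, hu'u, hYu]
    linear_combination ha
  · simp only [inner_add_left, real_inner_smul_left, hu'u', huu', hYu']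
    linear_combination ha

theorem exists_unit_triple_of_sq_le_two_thirds [FiniteDimensional ℝ S] (hS : 3 ≤ finrank ℝ S)
    {μ : ℝ} (hμ : μ ^ 2 ≤ 2 / 3) :
    ∃ w z w' : S, ‖w‖ = 1 ∧ ‖z‖ = 1 ∧ ‖w'‖ = 1 ∧
      ⟪w, w'⟫ = 1 / 3 ∧ ⟪w, z⟫ = μ ∧ ⟪z, w'⟫ = μ := by
  obtain ⟨e, he⟩ := exists_orthonormal_fin hS
  have key : ∀ l₁ l₂ : Fin 3 → ℝ,
      ⟪∑ i, l₁ i • e i, ∑ i, l₂ i • e i⟫ = l₁ 0 * l₂ 0 + l₁ 1 * l₂ 1 + l₁ 2 * l₂ 2 := by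
    intro l₁ l₂; rw [he.inner_sum]; simp [Fin.sum_univ_three]
  obtain ⟨a, ha0, ha⟩ : ∃ a : ℝ, 0 < a ∧ a ^ 2 = 2 / 3 :=
    ⟨√_, by positivity, Real.sq_sqrt (by norm_num)⟩
  obtain ⟨b, hb⟩ : ∃ b : ℝ, b ^ 2 = 1 / 3 := ⟨√_, Real.sq_sqrt (by norm_num)⟩
  obtain ⟨t, ht⟩ : ∃ t : ℝ, t ^ 2 = 1 - 3 / 2 * μ ^ 2 := ⟨√_, Real.sq_sqrt (by linarith)⟩
  refine ⟨∑ i, ![a, b, 0] i • e i, ∑ i, ![μ / a, 0, t] i • e i, ∑ i, ![a, -b, 0] i • e i,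
    norm_eq_one_of_real_inner_self_eq_one ?_, norm_eq_one_of_real_inner_self_eq_one ?_,
    norm_eq_one_of_real_inner_self_eq_one ?_, ?_, ?_, ?_⟩ <;> rw [key] <;> simp
  · linear_combination ha + hb
  · field_simp; linear_combination (-3 / 2 * μ ^ 2) * ha + a ^ 2 * ht
  · linear_combination ha + hb
  · linear_combination ha - hb
  · field_simp
  · field_simp

theorem colour_eq_of_inner_eq_rhombusCos [FiniteDimensional ℝ S] {α : Type*} (σ : S → α)
    {s : Finset α} (hs : #s ≤ finrank ℝ S) (hS : 3 ≤ finrank ℝ S)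
    (hσs : ∀ w, ‖w‖ = 1 → σ w ∈ s)
    (hσ : ∀ w w', ‖w‖ = 1 → ‖w'‖ = 1 → ⟪w, w'⟫ = 1 / 3 → σ w ≠ σ w')
    {u u' : S} (hu : ‖u‖ = 1) (hu' : ‖u'‖ = 1) (huu' : ⟪u, u'⟫ = rhombusCos (finrank ℝ S)) :
    σ u = σ u' := by
  classical
  obtain ⟨q, hq⟩ : ∃ q, finrank ℝ S = q + 2 := ⟨finrank ℝ S - 2, by omega⟩
  rw [hq] at huu'
  obtain ⟨c, hc, hcc, hcu⟩ := exists_equiangular_of_inner_eq_rhombusCos (by omega) hq hu hu' huu'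
  by_contra hne
  set T := univ.image (σ ∘ c)
  have hT : #T = q + 1 := by
    rw [card_image_of_injective _ fun i j hij => ?_, card_univ, Fintype.card_fin]
    by_contra hij'
    exact hσ _ _ (hc i) (hc j) (hcc i j hij') hij
  have huT : σ u ∉ T := by
    simp only [T, mem_image, mem_univ, true_and, Function.comp_apply, not_exists]
    exact fun j => hσ _ _ (hc j) hu (hcu j).1
  have hu'T : σ u' ∉ insert (σ u) T := by
    simp only [T, mem_insert, mem_image, mem_univ, true_and, Function.comp_apply, not_or,
      not_exists]
    exact ⟨Ne.symm hne, fun j => hσ _ _ (hc j) hu' (hcu j).2⟩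
  have hsub : insert (σ u') (insert (σ u) T) ⊆ s := by
    simp only [insert_subset_iff, T, image_subset_iff, mem_univ, Function.comp_apply,
      forall_const]
    exact ⟨hσs u' hu', hσs u hu, fun j => hσs _ (hc j)⟩
  have := card_le_card hsub
  rw [card_insert_of_notMem hu'T, card_insert_of_notMem huT, hT] at this
  omega

theorem exists_inner_eq_one_third_colour_eq [FiniteDimensional ℝ S] (hS : 3 ≤ finrank ℝ S)
    {α : Type*} (σ : S → α) {s : Finset α} (hs : #s ≤ finrank ℝ S)
    (hσs : ∀ w, ‖w‖ = 1 → σ w ∈ s) :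
    ∃ w w', ‖w‖ = 1 ∧ ‖w'‖ = 1 ∧ ⟪w, w'⟫ = 1 / 3 ∧ σ w = σ w' := by
  by_contra! hσ
  obtain ⟨w, z, w', hw, hz, hw', hww', hwz, hzw'⟩ :=
    exists_unit_triple_of_sq_le_two_thirds hS (rhombusCos_sq_le (by omega : 2 ≤ finrank ℝ S))
  exact hσ w w' hw hw' hww'
    ((colour_eq_of_inner_eq_rhombusCos σ hs hS hσs hσ hw hz hwz).trans
      (colour_eq_of_inner_eq_rhombusCos σ hs hS hσs hσ hz hw' hzw'))

end Sphere

section Lines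

variable {E : Type*} [NormedAddCommGroup E] [InnerProductSpace ℝ E]

theorem exists_unit_eq_add_smul_of_dist_eq {x y : E} {r : ℝ} (hr : 0 < r) (h : dist x y = r) :
    ∃ v : E, ‖v‖ = 1 ∧ y = x + r • v := by
  refine ⟨r⁻¹ • (y - x), ?_, ?_⟩
  · rw [norm_smul, ← dist_eq_norm', h, norm_inv, Real.norm_of_nonneg hr.le,
      inv_mul_cancel₀ hr.ne']
  · rw [smul_smul, mul_inv_cancel₀ hr.ne', one_smul, add_sub_cancel]

theorem norm_smul_add_sqrt_three_div_two_smul {v w : E} (hv : ‖v‖ = 1) (hw : ‖w‖ = 1)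
    (hvw : ⟪v, w⟫ = 0) {t : ℝ} (ht : t ^ 2 = 1 / 4) : ‖t • v + (√3 / 2) • w‖ = 1 := by
  have hwv : ⟪w, v⟫ = 0 := by rw [real_inner_comm, hvw]
  apply norm_eq_one_of_real_inner_self_eq_one
  simp only [inner_add_left, inner_add_right, real_inner_smul_left, real_inner_smul_right,
    inner_self_eq_one_of_norm_eq_one hv, inner_self_eq_one_of_norm_eq_one hw, hvw, hwv]
  linear_combination ht + Real.mul_self_sqrt (show (0 : ℝ) ≤ 3 by norm_num) / 4

theorem norm_sqrt_three_div_two_smul_sub {w w' : E} (hw : ‖w‖ = 1) (hw' : ‖w'‖ = 1)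
    (h : ⟪w, w'⟫ = 1 / 3) : ‖(√3 / 2) • (w - w')‖ = 1 := by
  have h' : ⟪w', w⟫ = 1 / 3 := by rw [real_inner_comm, h]
  apply norm_eq_one_of_real_inner_self_eq_one
  simp only [inner_sub_left, inner_sub_right, real_inner_smul_left, real_inner_smul_right,
    inner_self_eq_one_of_norm_eq_one hw, inner_self_eq_one_of_norm_eq_one hw', h, h']
  linear_combination Real.mul_self_sqrt (show (0 : ℝ) ≤ 3 by norm_num) / 3

theorem exists_red_on_shifted_line {R : Set E} (hR : ¬∃ x ∈ R, ∃ y ∈ R, dist x y = 1)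
    {x v w : E} {d m : ℕ} (hx : x ∈ R) (hy : x + (d : ℝ) • v ∈ R)
    (hv : ‖v‖ = 1) (hw : ‖w‖ = 1) (hvw : ⟪v, w⟫ = 0)
    (hline : ∀ p, ∃ i ≤ m, p + (i : ℝ) • v ∈ R) :
    ∃ i ∈ range (m + 1) \ {0, 1, d, d + 1}, x + ((i : ℝ) - 1 / 2) • v + (√3 / 2) • w ∈ R := by
  have hdist : ∀ z : E, ∀ t : ℝ, t ^ 2 = 1 / 4 → dist (z + t • v + (√3 / 2) • w) z = 1 :=
    fun z t ht => by
      rw [dist_eq_norm, add_assoc, add_sub_cancel_left]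
      exact norm_smul_add_sqrt_three_div_two_smul hv hw hvw ht
  obtain ⟨i, him, hi⟩ := hline (x + (-1 / 2 : ℝ) • v + (√3 / 2) • w)
  have hP : x + (-1 / 2 : ℝ) • v + (√3 / 2) • w + (i : ℝ) • v =
      x + ((i : ℝ) - 1 / 2) • v + (√3 / 2) • w := by module
  have hP' : x + ((i : ℝ) - 1 / 2) • v + (√3 / 2) • w =
      x + (d : ℝ) • v + ((i : ℝ) - d - 1 / 2) • v + (√3 / 2) • w := by module
  rw [hP] at hi
  refine ⟨i, mem_sdiff.2 ⟨mem_range.2 (by omega), ?_⟩, hi⟩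
  simp only [mem_insert, mem_singleton]
  rintro (rfl | rfl | rfl | rfl)
  · exact hR ⟨_, hi, x, hx, hdist x _ (by norm_num)⟩
  · exact hR ⟨_, hi, x, hx, hdist x _ (by norm_num)⟩
  · rw [hP'] at hi; exact hR ⟨_, hi, _, hy, hdist _ _ (by ring)⟩
  · rw [hP'] at hi; exact hR ⟨_, hi, _, hy, hdist _ _ (by push_cast; ring)⟩

end Lines

theorem card_range_sdiff_four {d m : ℕ} (hd : 2 ≤ d) (hdm : d + 2 ≤ m) :
    #(range m \ {0, 1, d, d + 1}) = m - 4 := by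
  rw [card_sdiff_of_subset, card_range, card_insert_of_notMem, card_insert_of_notMem, card_pair]
  all_goals
    simp only [ne_eq, mem_insert, mem_singleton, insert_subset_iff, singleton_subset_iff,
      mem_range]
    omega

/-- Lemma 2.3: for `k ≥ 4`, if no two red points of `ℝ^k` are at distance 1, but some two red
points are at distance `d` for an integer `2 ≤ d ≤ k+1`, then there is a blue `ℓ_{k+3}`. -/
theorem blue_line_of_red_integer_distance (k : ℕ) (hk : 4 ≤ k)
    (R : Set (EuclideanSpace ℝ (Fin k)))
    (hR : ¬∃ x ∈ R, ∃ y ∈ R, dist x y = 1)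
    (hd : ∃ d : ℕ, 2 ≤ d ∧ d ≤ k + 1 ∧ ∃ x ∈ R, ∃ y ∈ R, dist x y = (d : ℝ)) :
    ∃ p v : EuclideanSpace ℝ (Fin k), ‖v‖ = 1 ∧
      ∀ i : ℕ, i ≤ k + 2 → p + (i : ℝ) • v ∉ R := by
  by_contra! hblue
  obtain ⟨d, hd2, hdk, x, hx, y, hy, hxy⟩ := hd
  obtain ⟨v, hv, rfl⟩ := exists_unit_eq_add_smul_of_dist_eq (by positivity) hxy
  set K := (ℝ ∙ v)ᗮ
  have hK : finrank ℝ K = k - 1 := by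
    show finrank ℝ (ℝ ∙ v)ᗮ = k - 1
    have := (ℝ ∙ v).finrank_add_finrank_orthogonal
    rw [finrank_span_singleton (norm_ne_zero_iff.1 (by simp [hv])),
      finrank_euclideanSpace_fin] at this
    omega
  have hslot : ∀ w : K, ∃ i, ‖w‖ = 1 → i ∈ range (k + 3) \ {0, 1, d, d + 1} ∧
      x + ((i : ℝ) - 1 / 2) • v + (√3 / 2) • (w : EuclideanSpace ℝ (Fin k)) ∈ R := fun w => by
    by_cases hw : ‖w‖ = 1
    · obtain ⟨i, hi, hiR⟩ := exists_red_on_shifted_line hR hx hy hv hw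
        (Submodule.mem_orthogonal_singleton_iff_inner_right.1 w.2) fun p => hblue p v hv
      exact ⟨i, fun _ => ⟨hi, hiR⟩⟩
    · exact ⟨0, fun h => absurd h hw⟩
  choose σ hσ using hslot
  obtain ⟨w, w', hw, hw', hww', hσw⟩ := exists_inner_eq_one_third_colour_eq
    (by omega : 3 ≤ finrank ℝ K) σ (by rw [card_range_sdiff_four hd2 (by omega), hK]; omega)
    fun w hw => (hσ w hw).1
  have hw'R := (hσ w' hw').2
  rw [← hσw] at hw'R
  refine hR ⟨_, (hσ w hw).2, _, hw'R, ?_⟩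
  rw [dist_eq_norm, add_sub_add_left_eq_sub, ← smul_sub]
  exact norm_sqrt_three_div_two_smul_sub hw hw' hww'
end

section
/- Let n ≥ 3 be an integer, let O ∈ ℝ^n, let r > 0, and let S be the sphere of radius r centred at O. Let θ be an angle with 0 < θ < π. Suppose R is a nonempty subset of S with the following closure property: for every A ∈ R, every point C ∈ S such that the angle between the vectors C − O and O − A equals θ also belongs to R. Then R = S, i.e. every point of the sphere belongs to R. -/
/-!
Write `c = cos θ`, so that the closure property moves a point `A ∈ R` to every point `C` of the
sphere with `⟪C - O, A - O⟫ = -c r²`. If `A ∈ R` and `D` lies on the sphere with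
`⟪A - O, D - O⟫ ≥ (2c² - 1) r²`, a third dimension leaves room for a point `C` with this inner
product against both `A - O` and `D - O`, so two moves carry `A` to `D`. As `c² < 1`, this
threshold lies below `r²`, so `R` and its complement are both open in the sphere, and the sphere
is connected.
-/

open Metric InnerProductGeometry Filter Topology
open scoped RealInnerProductSpace

variable {E : Type*} [NormedAddCommGroup E] [InnerProductSpace ℝ E]

lemma angle_eq_arccos_of_inner_eq {x y : E} {r c : ℝ} (hr : r ≠ 0) (hx : ‖x‖ = r)
    (hy : ‖y‖ = r) (hxy : ⟪x, y⟫ = c * r ^ 2) : angle x y = Real.arccos c := by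
  rw [angle, hx, hy, hxy]
  field_simp

lemma exists_norm_eq_one_inner_eq_zero_inner_eq_zero [FiniteDimensional ℝ E]
    (hE : 3 ≤ Module.finrank ℝ E) (a d : E) :
    ∃ w : E, ‖w‖ = 1 ∧ ⟪a, w⟫ = 0 ∧ ⟪d, w⟫ = 0 := by
  let f : E →ₗ[ℝ] ℝ × ℝ := (innerₛₗ ℝ a).prod (innerₛₗ ℝ d)
  have hker : LinearMap.ker f ≠ ⊥ := LinearMap.ker_ne_bot_of_finrank_lt (by simp; omega)
  obtain ⟨v, hv, hv0⟩ := Submodule.exists_mem_ne_zero_of_ne_bot hker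
  have hva : ⟪a, v⟫ = 0 := congrArg Prod.fst hv
  have hvd : ⟪d, v⟫ = 0 := congrArg Prod.snd hv
  exact ⟨(‖v‖⁻¹ : ℝ) • v, norm_smul_inv_norm hv0, by simp [real_inner_smul_right, hva],
    by simp [real_inner_smul_right, hvd]⟩

lemma exists_norm_eq_inner_eq_inner_eq [FiniteDimensional ℝ E] (hE : 3 ≤ Module.finrank ℝ E)
    {a d : E} {r c : ℝ} (ha : ‖a‖ = r) (hd : ‖d‖ = r)
    (had : (2 * c ^ 2 - 1) * r ^ 2 ≤ ⟪a, d⟫) :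
    ∃ u : E, ‖u‖ = r ∧ ⟪u, a⟫ = -(c * r ^ 2) ∧ ⟪u, d⟫ = -(c * r ^ 2) := by
  obtain ⟨w, hw, hwa, hwd⟩ := exists_norm_eq_one_inner_eq_zero_inner_eq_zero hE a d
  have hM : ‖a + d‖ ^ 2 = 2 * r ^ 2 + 2 * ⟪a, d⟫ := by rw [norm_add_sq_real, ha, hd]; ring
  set M := ‖a + d‖ ^ 2
  have hcM : 4 * c ^ 2 * r ^ 2 ≤ M := by linarith
  -- The witness is `α • (a + d) + γ • w`: `α` fixes both inner products, `γ` the norm.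
  -- If `M = 0` then `c * r = 0`, so the junk value `α = 0` still does the job.
  set α := -(2 * c * r ^ 2) / M
  have hαM : α * M = -(2 * c * r ^ 2) := div_mul_cancel_of_imp fun hM0 => by
    have hcr : (c * r) ^ 2 = 0 := le_antisymm (by linarith) (sq_nonneg _)
    linear_combination (-2 * r) * (pow_eq_zero_iff two_ne_zero).1 hcr
  have hαsq : α ^ 2 * M ≤ r ^ 2 := by
    rw [sq α, mul_assoc, hαM, div_mul_eq_mul_div]
    exact div_le_of_le_mul₀ (by positivity) (sq_nonneg r) (by nlinarith [sq_nonneg r])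
  have hγ := Real.sq_sqrt (sub_nonneg.2 hαsq)
  set γ := √(r ^ 2 - α ^ 2 * M)
  have hsum_a : ⟪a + d, a⟫ = M / 2 := by
    rw [inner_add_left, real_inner_self_eq_norm_sq, ha, real_inner_comm, hM]; ring
  have hsum_d : ⟪a + d, d⟫ = M / 2 := by
    rw [inner_add_left, real_inner_self_eq_norm_sq, hd, hM]; ring
  have hsum_w : ⟪α • (a + d), γ • w⟫ = 0 := by
    simp [real_inner_smul_left, real_inner_smul_right, inner_add_left, hwa, hwd]
  refine ⟨α • (a + d) + γ • w, ?_, ?_, ?_⟩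
  · have hr : 0 ≤ r := ha ▸ norm_nonneg a
    rw [← pow_left_inj₀ (norm_nonneg _) hr two_ne_zero, norm_add_sq_real, hsum_w, norm_smul,
      norm_smul, hw, Real.norm_eq_abs, Real.norm_eq_abs, mul_pow, mul_pow, sq_abs, sq_abs]
    linear_combination hγ
  · rw [inner_add_left, real_inner_smul_left, real_inner_smul_left, real_inner_comm a w, hwa,
      hsum_a]
    linear_combination hαM / 2
  · rw [inner_add_left, real_inner_smul_left, real_inner_smul_left, real_inner_comm d w, hwd,
      hsum_d]
    linear_combination hαM / 2

section Sphere

variable {O : E} {r : ℝ} {R : Set E}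

lemma mem_of_inner_ge_of_forall_inner_eq_mem [FiniteDimensional ℝ E]
    (hE : 3 ≤ Module.finrank ℝ E) {c : ℝ} (hsub : R ⊆ sphere O r)
    (hstep : ∀ A ∈ R, ∀ C ∈ sphere O r, ⟪C - O, A - O⟫ = -(c * r ^ 2) → C ∈ R)
    {A D : E} (hA : A ∈ R) (hD : D ∈ sphere O r)
    (hAD : (2 * c ^ 2 - 1) * r ^ 2 ≤ ⟪A - O, D - O⟫) : D ∈ R := by
  obtain ⟨u, hu, huA, huD⟩ := exists_norm_eq_inner_eq_inner_eq hE
    (mem_sphere_iff_norm.1 (hsub hA)) (mem_sphere_iff_norm.1 hD) hAD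
  have hC : O + u ∈ sphere O r := by simpa [mem_sphere_iff_norm] using hu
  have hCR : O + u ∈ R := hstep A hA _ hC (by simpa using huA)
  exact hstep _ hCR D hD (by rw [add_sub_cancel_left, real_inner_comm]; exact huD)

lemma eq_sphere_of_forall_inner_gt_mem (hE : 1 < Module.rank ℝ E) {t : ℝ} (ht : t < r ^ 2)
    (hsub : R ⊆ sphere O r) (hne : R.Nonempty)
    (hcap : ∀ A ∈ R, ∀ D ∈ sphere O r, t < ⟪A - O, D - O⟫ → D ∈ R) :
    R = sphere O r := by
  obtain ⟨A, hA⟩ := hne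
  have hconn := (isConnected_sphere hE O (nonneg_of_mem_sphere (hsub hA))).isPreconnected
  refine hsub.antisymm fun D hD =>
    hconn.induction₂' (fun x y => x ∈ R → y ∈ R) (fun x hx => ?_)
      (fun _ _ _ _ _ _ hxy hyz => hyz ∘ hxy) (hsub hA) hD hA
  have hx_mem : x ∈ {y | t < ⟪x - O, y - O⟫} := by
    rwa [Set.mem_ofPred_eq, real_inner_self_eq_norm_sq, mem_sphere_iff_norm.1 hx]
  have hnhds := (isOpen_lt continuous_const (by fun_prop)).mem_nhds hx_mem
  filter_upwards [nhdsWithin_le_nhds hnhds, self_mem_nhdsWithin] with y hy hyS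
  exact ⟨fun hxR => hcap x hxR y hyS hy,
    fun hyR => hcap y hyR x hx (by rwa [real_inner_comm])⟩

end Sphere

/-- The spreading argument at the end of Lemma 2.2: if a nonempty subset `R` of a sphere of
radius `r` in `ℝ^n` (`n ≥ 3`) is closed under moving to any point at fixed angle
`θ ∈ (0, π)` from the antipode direction, then `R` is the whole sphere. -/
theorem spread_over_sphere (n : ℕ) (hn : 3 ≤ n)
    (O : EuclideanSpace ℝ (Fin n)) (r : ℝ) (hr : 0 < r)
    (θ : ℝ) (hθ : 0 < θ) (hθ' : θ < Real.pi)
    (R : Set (EuclideanSpace ℝ (Fin n)))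
    (hsub : R ⊆ Metric.sphere O r) (hne : R.Nonempty)
    (hclosed : ∀ A ∈ R, ∀ C ∈ Metric.sphere O r,
      InnerProductGeometry.angle (C - O) (O - A) = θ → C ∈ R) :
    R = Metric.sphere O r := by
  set c := Real.cos θ
  have hc : c ^ 2 < 1 := by
    nlinarith [Real.sin_sq_add_cos_sq θ, Real.sin_pos_of_pos_of_lt_pi hθ hθ']
  have hstep : ∀ A ∈ R, ∀ C ∈ sphere O r, ⟪C - O, A - O⟫ = -(c * r ^ 2) → C ∈ R := by
    intro A hA C hC hCA
    refine hclosed A hA C hC ?_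
    rw [angle_eq_arccos_of_inner_eq hr.ne' (mem_sphere_iff_norm.1 hC)
      (by rw [← dist_eq_norm]; exact mem_sphere'.1 (hsub hA)), Real.arccos_cos hθ.le hθ'.le]
    rw [← neg_sub A O, inner_neg_right, hCA, neg_neg]
  have ht : (2 * c ^ 2 - 1) * r ^ 2 < r ^ 2 := by
    nlinarith [mul_pos (sub_pos.2 hc) (pow_pos hr 2)]
  have hE : Module.finrank ℝ (EuclideanSpace ℝ (Fin n)) = n := finrank_euclideanSpace_fin
  exact eq_sphere_of_forall_inner_gt_mem (Module.one_lt_rank_of_one_lt_finrank (by omega)) ht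
    hsub hne fun A hA D hD hAD =>
      mem_of_inner_ge_of_forall_inner_eq_mem (by omega) hsub hstep hA hD hAD.le
end

section
/- Let n ≥ 3 be an integer, let O ∈ ℝ^n, and let S be the sphere of radius √3/2 centred at O. Let A, A_1, …, A_{n−1} be n points on S that are pairwise at distance exactly 1 from each other. Let A' be the reflection of A across the affine subspace spanned by the points O, A_1, …, A_{n−1}. Then A' lies on S, A' is at distance exactly 1 from each of A_1, …, A_{n−1}, and A' is not equal to the antipodal point 2O − A of A. -/
namespace EuclideanGeometry

variable {V : Type*} [NormedAddCommGroup V] [InnerProductSpace ℝ V]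
  (s : AffineSubspace ℝ V) [Nonempty s] [s.direction.HasOrthogonalProjection]

theorem reflection_eq_two_smul_sub_iff (p c : V) :
    reflection s p = (2 : ℝ) • c - p ↔ (orthogonalProjection s p : V) = c := by
  rw [reflection_apply', vsub_eq_sub, vadd_eq_add, sub_add_eq_add_sub, ← two_smul ℝ,
    sub_left_inj]
  exact (smul_right_injective V two_ne_zero).eq_iff

/-- Such a reflection would make `c` the foot of the perpendicular from `p`, giving a right angle
at `c` in the triangle `p c q`. -/
theorem reflection_ne_two_smul_sub_of_dist_sq_ne {p c q : V} (hq : q ∈ s)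
    (hpq : dist q p * dist q p ≠ dist q c * dist q c + dist p c * dist p c) :
    reflection s p ≠ (2 : ℝ) • c - p := by
  rw [Ne, reflection_eq_two_smul_sub_iff]
  intro hc
  exact hpq (hc ▸ dist_sq_eq_dist_orthogonalProjection_sq_add_dist_orthogonalProjection_sq p hq)

end EuclideanGeometry

theorem reflection_of_simplex_vertex_general (n : ℕ) (hn : 3 ≤ n)
    (O A : EuclideanSpace ℝ (Fin n)) (B : Fin (n - 1) → EuclideanSpace ℝ (Fin n))
    (hA : A ∈ Metric.sphere O (Real.sqrt 3 / 2))
    (hB : ∀ i, B i ∈ Metric.sphere O (Real.sqrt 3 / 2))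
    (hAB : ∀ i, dist A (B i) = 1)
    (A' : EuclideanSpace ℝ (Fin n))
    (hA' : A' = EuclideanGeometry.reflection
      (affineSpan ℝ (insert O (Set.range B))) A) :
    A' ∈ Metric.sphere O (Real.sqrt 3 / 2) ∧
      (∀ i, dist A' (B i) = 1) ∧
      A' ≠ (2 : ℝ) • O - A := by
  set s := affineSpan ℝ (insert O (Set.range B))
  have hO : O ∈ s := subset_affineSpan ℝ _ (Set.mem_insert _ _)
  have hB_mem (i) : B i ∈ s := subset_affineSpan ℝ _ (Set.mem_insert_of_mem _ ⟨i, rfl⟩)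
  have hdist {q} (hq : q ∈ s) : dist A' q = dist A q := by
    rw [hA', dist_comm, EuclideanGeometry.dist_reflection_eq_of_mem s hq, dist_comm]
  refine ⟨by rwa [Metric.mem_sphere, hdist hO], fun i ↦ by rw [hdist (hB_mem i), hAB i], ?_⟩
  let i₀ : Fin (n - 1) := ⟨0, by omega⟩
  rw [hA']
  refine EuclideanGeometry.reflection_ne_two_smul_sub_of_dist_sq_ne s (hB_mem i₀) ?_
  rw [dist_comm, hAB i₀, Metric.mem_sphere.mp (hB i₀), Metric.mem_sphere.mp hA,
    div_mul_div_comm, Real.mul_self_sqrt (by norm_num : (0 : ℝ) ≤ 3)]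
  norm_num

/-- The geometric construction inside the Claim of Lemma 2.2: reflecting a vertex `A` of a
unit simplex inscribed in the sphere `S` of radius `√3/2` across the affine span of `O` and
the remaining vertices yields a point of `S` at distance 1 from the remaining vertices, and
this point is not the antipode of `A`. -/
theorem reflection_of_simplex_vertex (n : ℕ) (hn : 3 ≤ n)
    (O A : EuclideanSpace ℝ (Fin n)) (B : Fin (n - 1) → EuclideanSpace ℝ (Fin n))
    (hA : A ∈ Metric.sphere O (Real.sqrt 3 / 2))
    (hB : ∀ i, B i ∈ Metric.sphere O (Real.sqrt 3 / 2))
    (hAB : ∀ i, dist A (B i) = 1)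
    (hBB : ∀ i j, i ≠ j → dist (B i) (B j) = 1)
    (A' : EuclideanSpace ℝ (Fin n))
    (hA' : A' = EuclideanGeometry.reflection
      (affineSpan ℝ (insert O (Set.range B))) A) :
    A' ∈ Metric.sphere O (Real.sqrt 3 / 2) ∧
      (∀ i, dist A' (B i) = 1) ∧
      A' ≠ (2 : ℝ) • O - A :=
  reflection_of_simplex_vertex_general n hn O A B hA hB hAB A' hA'
end

section
/- Let k ≥ 4 be an integer, let A ∈ ℝ^k, and let S be the sphere of radius k+2 centred at A. For every point B on S, there exist two points P₁ and P₂ on S such that dist(B, P₁) = dist(B, P₂) = 1 and dist(P₁, P₂) = (k+2)/(k+3). -/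
/-!
Write `B = A + R • u` with `‖u‖ = 1`. The points of `sphere A R` at distance `1` from `B` form
a sphere of radius `√(1 - 1/(4R²))` centred at `A + (R - 1/(2R)) • u` in the hyperplane
orthogonal to `u`. Once the dimension is at least `3` this small sphere contains two points at
any prescribed distance `d ≤ 2√(1 - 1/(4R²))`, and `d = (k+2)/(k+3) < 1` is such a distance
for `R = k + 2`.
-/

open Module Metric

section

variable {E : Type*} [NormedAddCommGroup E] [InnerProductSpace ℝ E]

theorem Orthonormal.norm_smul_add_smul_add_smul_sq {ι : Type*} {e : ι → E}
    (he : Orthonormal ℝ e) {i j l : ι} (hij : i ≠ j) (hil : i ≠ l) (hjl : j ≠ l)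
    (a b c : ℝ) : ‖a • e i + b • e j + c • e l‖ ^ 2 = a ^ 2 + b ^ 2 + c ^ 2 := by
  classical
  rw [← real_inner_self_eq_norm_sq]
  simp only [inner_add_left, inner_add_right, real_inner_smul_left, real_inner_smul_right,
    orthonormal_iff_ite.mp he, if_pos, if_neg hij, if_neg hil, if_neg hjl, if_neg hij.symm,
    if_neg hil.symm, if_neg hjl.symm]
  ring

theorem Orthonormal.dist_eq_of_sub_eq {ι : Type*} {e : ι → E}
    (he : Orthonormal ℝ e) {i j l : ι} (hij : i ≠ j) (hil : i ≠ l) (hjl : j ≠ l)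
    {P Q : E} {a b c r : ℝ} (hPQ : P - Q = a • e i + b • e j + c • e l) (hr : 0 ≤ r)
    (habc : a ^ 2 + b ^ 2 + c ^ 2 = r ^ 2) : dist P Q = r := by
  rw [dist_eq_norm, hPQ, ← sq_eq_sq₀ (norm_nonneg _) hr,
    he.norm_smul_add_smul_add_smul_sq hij hil hjl, habc]

theorem exists_pair_mem_sphere_dist_eq_one_of_orthonormal {ι : Type*} {e : ι → E}
    (he : Orthonormal ℝ e) {i j l : ι} (hij : i ≠ j) (hil : i ≠ l) (hjl : j ≠ l)
    (A : E) {R d : ℝ} (hR : 0 < R) (hd : 0 ≤ d) (hdR : d ^ 2 ≤ 4 - 1 / R ^ 2) :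
    ∃ P₁ ∈ sphere A R, ∃ P₂ ∈ sphere A R,
      dist (A + R • e i) P₁ = 1 ∧ dist (A + R • e i) P₂ = 1 ∧ dist P₁ P₂ = d := by
  -- `x` and `a` solve `x² + a² + (d/2)² = R²` and `(R - x)² + a² + (d/2)² = 1`.
  set x := R - 1 / (2 * R) with hx
  set a := √(1 - 1 / (4 * R ^ 2) - d ^ 2 / 4)
  have ha : a ^ 2 = 1 - 1 / (4 * R ^ 2) - d ^ 2 / 4 := by
    refine Real.sq_sqrt ?_
    have : 1 / (4 * R ^ 2) = 1 / R ^ 2 / 4 := by ring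
    linarith
  refine ⟨A + x • e i + a • e j + (d / 2) • e l, ?_,
    A + x • e i + a • e j + (-(d / 2)) • e l, ?_, ?_, ?_, ?_⟩
  · refine mem_sphere.2 <| he.dist_eq_of_sub_eq hij hil hjl (by abel) hR.le ?_
    rw [ha, hx]; field_simp; ring
  · refine mem_sphere.2 <| he.dist_eq_of_sub_eq hij hil hjl (by abel) hR.le ?_
    rw [ha, hx]; field_simp; ring
  · refine he.dist_eq_of_sub_eq hij hil hjl (a := R - x) (b := -a) (c := -(d / 2))
      (by module) zero_le_one ?_
    rw [neg_sq, neg_sq, ha, hx]; field_simp; ring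
  · refine he.dist_eq_of_sub_eq hij hil hjl (a := R - x) (b := -a) (c := d / 2)
      (by module) zero_le_one ?_
    rw [neg_sq, ha, hx]; field_simp; ring
  · exact he.dist_eq_of_sub_eq hij hil hjl (a := 0) (b := 0) (c := d) (by module) hd (by ring)

theorem exists_orthonormalBasis_apply_eq [FiniteDimensional ℝ E] {u : E} (hu : ‖u‖ = 1)
    (i : Fin (finrank ℝ E)) : ∃ b : OrthonormalBasis (Fin (finrank ℝ E)) ℝ E, b i = u := by
  have hu' : Orthonormal ℝ (({i} : Set (Fin (finrank ℝ E))).domRestrict fun _ ↦ u) :=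
    ⟨fun _ ↦ hu, Subsingleton.pairwise⟩
  obtain ⟨b, hb⟩ := hu'.exists_orthonormalBasis_extension_of_card_eq (Fintype.card_fin _).symm
  exact ⟨b, hb i rfl⟩

theorem exists_pair_mem_sphere_dist_eq_one [FiniteDimensional ℝ E] (hE : 3 ≤ finrank ℝ E)
    {A B : E} {R d : ℝ} (hR : 0 < R) (hB : B ∈ sphere A R) (hd : 0 ≤ d)
    (hdR : d ^ 2 ≤ 4 - 1 / R ^ 2) :
    ∃ P₁ ∈ sphere A R, ∃ P₂ ∈ sphere A R, dist B P₁ = 1 ∧ dist B P₂ = 1 ∧ dist P₁ P₂ = d := by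
  have hBA : ‖B - A‖ = R := by rwa [← dist_eq_norm, ← mem_sphere]
  have hu : ‖R⁻¹ • (B - A)‖ = 1 := by
    rw [norm_smul, hBA, norm_inv, Real.norm_of_nonneg hR.le, inv_mul_cancel₀ hR.ne']
  obtain ⟨b, hb⟩ := exists_orthonormalBasis_apply_eq hu ⟨0, by omega⟩
  have hBu : B = A + R • b ⟨0, by omega⟩ := by
    rw [hb, smul_smul, mul_inv_cancel₀ hR.ne', one_smul, add_sub_cancel]
  rw [hBu]
  exact exists_pair_mem_sphere_dist_eq_one_of_orthonormal b.orthonormal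
    (j := ⟨1, by omega⟩) (l := ⟨2, by omega⟩) (by simp) (by simp) (by simp) A hR hd hdR

end

/-- The geometric step in the final part of the main proof: on the sphere of radius `k+2`
around `A`, for every point `B` of the sphere there are points `P₁, P₂` of the sphere with
`dist B P₁ = dist B P₂ = 1` and `dist P₁ P₂ = (k+2)/(k+3)`. -/
theorem exists_two_close_points_on_sphere (k : ℕ) (hk : 4 ≤ k)
    (A : EuclideanSpace ℝ (Fin k))
    (B : EuclideanSpace ℝ (Fin k)) (hB : B ∈ Metric.sphere A ((k : ℝ) + 2)) :
    ∃ P₁ ∈ Metric.sphere A ((k : ℝ) + 2), ∃ P₂ ∈ Metric.sphere A ((k : ℝ) + 2),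
      dist B P₁ = 1 ∧ dist B P₂ = 1 ∧ dist P₁ P₂ = ((k : ℝ) + 2) / ((k : ℝ) + 3) := by
  have hR : (1 : ℝ) ≤ (k : ℝ) + 2 := by linarith [Nat.cast_nonneg (α := ℝ) k]
  have hd : ((k : ℝ) + 2) / ((k : ℝ) + 3) ≤ 1 := div_le_one_of_le₀ (by linarith) (by positivity)
  have hdR : (((k : ℝ) + 2) / ((k : ℝ) + 3)) ^ 2 ≤ 4 - 1 / ((k : ℝ) + 2) ^ 2 := by
    have h1 : (((k : ℝ) + 2) / ((k : ℝ) + 3)) ^ 2 ≤ 1 := pow_le_one₀ (by positivity) hd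
    have h2 : 1 / ((k : ℝ) + 2) ^ 2 ≤ 1 := div_le_one_of_le₀ (one_le_pow₀ hR) (by positivity)
    linarith
  refine exists_pair_mem_sphere_dist_eq_one ?_ (by positivity) hB (by positivity) hdR
  rw [finrank_euclideanSpace_fin]
  omega
end
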